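/- Consider the non-exhaustive sampling variance formula: if Y_{it} = b + a_i + g_t + w_{it} with the standard uncorrelated mean-zero two-way decomposition and W ∈ {0,1}^{N×T} is a fixed (non-random) selection matrix with at least one 1, then Var(Ȳ_{NT,W}) = (1/(NT p̄))·[T p̄ σ_a² · (1/N)∑_i (p_i/p̄)² + N p̄ σ_g² · (1/T)∑_t (p_t/p̄)² + σ_w²], where Ȳ_{NT,W} := (∑_{i,t}W_{it})^{-1}∑_{i,t}W_{it}Y_{it}, p_i := (1/T)∑_t W_{it}, p_t := (1/N)∑_i W_{it}, p̄ := (1/(NT))∑_{i,t}W_{it}. -/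

import Mathlib

open MeasureTheory ProbabilityTheory

/-! Up to the constant `b`, the sum `∑ W_it Y_it` is the linear combination of the pairwise
uncorrelated family `(a_i), (g_t), (w_it)` with coefficients the row sums `T p_i`, the column
sums `N p_t` and the `W_it`. Its variance is therefore
`σ_a² ∑ (T p_i)² + σ_g² ∑ (N p_t)² + σ_w² ∑ W_it²`, and `W_it² = W_it` turns the last sum into
`N T p̄`; dividing by `(N T p̄)²` gives the formula. -/

namespace ProbabilityTheory

variable {Ω : Type*} [MeasurableSpace Ω] {μ : Measure Ω}

lemma covariance_eq_integral_mul {X Y : Ω → ℝ} (hX : μ[X] = 0) (hY : μ[Y] = 0) :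
    cov[X, Y; μ] = ∫ ω, X ω * Y ω ∂μ := by
  simp [covariance, hX, hY]

lemma variance_fun_sum_const_mul_of_uncorrelated [IsFiniteMeasure μ] {ι : Type*} [Fintype ι]
    {X : ι → Ω → ℝ} (hX : ∀ i, MemLp (X i) 2 μ)
    (hcov : Pairwise fun i j => cov[X i, X j; μ] = 0) (c : ι → ℝ) :
    Var[fun ω => ∑ i, c i * X i ω; μ] = ∑ i, c i ^ 2 * Var[X i; μ] := by
  classical
  rw [variance_fun_sum fun i => (hX i).const_mul (c i)]
  refine Finset.sum_congr rfl fun i _ => ?_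
  rw [Finset.sum_eq_single i (fun j _ hji => ?_) (by simp)]
  · rw [covariance_const_mul_left, covariance_const_mul_right,
      covariance_self (hX i).aemeasurable]
    ring
  · rw [covariance_const_mul_left, covariance_const_mul_right, hcov hji.symm, mul_zero, mul_zero]

end ProbabilityTheory

section TwoWay

variable {Ω ι κ : Type*}

def twoWayComponent (a : ι → Ω → ℝ) (g : κ → Ω → ℝ) (w : ι → κ → Ω → ℝ) :
    ι ⊕ κ ⊕ ι × κ → Ω → ℝ :=
  Sum.elim a (Sum.elim g fun p => w p.1 p.2)

def twoWayWeight [Fintype ι] [Fintype κ] (W : ι → κ → ℝ) : ι ⊕ κ ⊕ ι × κ → ℝ :=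
  Sum.elim (fun i => ∑ t, W i t) (Sum.elim (fun t => ∑ i, W i t) fun p => W p.1 p.2)

lemma sum_mul_twoWay_eq [Fintype ι] [Fintype κ] (W : ι → κ → ℝ) (b : ℝ) (a : ι → Ω → ℝ)
    (g : κ → Ω → ℝ) (w : ι → κ → Ω → ℝ) (ω : Ω) :
    ∑ i, ∑ t, W i t * (b + a i ω + g t ω + w i t ω)
      = (∑ i, ∑ t, W i t) * b + ∑ k, twoWayWeight W k * twoWayComponent a g w k ω := by
  simp only [twoWayWeight, twoWayComponent, Fintype.sum_sum_type, Fintype.sum_prod_type,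
    Sum.elim_inl, Sum.elim_inr, mul_add, Finset.sum_add_distrib, Finset.sum_mul]
  rw [Finset.sum_comm (f := fun i t => W i t * g t ω)]
  ring

lemma pairwise_covariance_twoWayComponent_eq_zero [MeasurableSpace Ω] {μ : Measure Ω}
    {a : ι → Ω → ℝ} {g : κ → Ω → ℝ} {w : ι → κ → Ω → ℝ}
    (hamean : ∀ i, ∫ ω, a i ω ∂μ = 0) (hgmean : ∀ t, ∫ ω, g t ω ∂μ = 0)
    (hwmean : ∀ i t, ∫ ω, w i t ω ∂μ = 0)
    (haa : ∀ i j, i ≠ j → ∫ ω, a i ω * a j ω ∂μ = 0)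
    (hgg : ∀ s t, s ≠ t → ∫ ω, g s ω * g t ω ∂μ = 0)
    (hww : ∀ i t j s, (i, t) ≠ (j, s) → ∫ ω, w i t ω * w j s ω ∂μ = 0)
    (hag : ∀ i t, ∫ ω, a i ω * g t ω ∂μ = 0)
    (haw : ∀ j i t, ∫ ω, a j ω * w i t ω ∂μ = 0)
    (hgw : ∀ s i t, ∫ ω, g s ω * w i t ω ∂μ = 0) :
    Pairwise fun k l => cov[twoWayComponent a g w k, twoWayComponent a g w l; μ] = 0 := by
  have hmean : ∀ k, μ[twoWayComponent a g w k] = 0 := by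
    rintro (i | t | ⟨i, t⟩)
    exacts [hamean i, hgmean t, hwmean i t]
  intro k l hkl
  rw [covariance_eq_integral_mul (hmean k) (hmean l)]
  have hswap : ∀ X Y : Ω → ℝ, ∫ ω, X ω * Y ω ∂μ = ∫ ω, Y ω * X ω ∂μ := fun X Y => by
    simp only [mul_comm]
  rcases k with i | t | ⟨i, t⟩ <;> rcases l with j | s | ⟨j, s⟩ <;>
    simp only [twoWayComponent, Sum.elim_inl, Sum.elim_inr, ne_eq, Sum.inl.injEq,
      Sum.inr.injEq, reduceCtorEq] at hkl ⊢
  · exact haa i j hkl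
  · exact hag i s
  · exact haw i j s
  · rw [hswap]; exact hag j t
  · exact hgg t s hkl
  · exact hgw t j s
  · rw [hswap]; exact haw j i t
  · rw [hswap]; exact hgw s i t
  · exact hww i t j s hkl

lemma variance_sum_mul_twoWay [MeasurableSpace Ω] {μ : Measure Ω} [IsProbabilityMeasure μ]
    [Fintype ι] [Fintype κ] (W : ι → κ → ℝ) (b : ℝ) {a : ι → Ω → ℝ} {g : κ → Ω → ℝ}
    {w : ι → κ → Ω → ℝ} {σa σg σw : ℝ}
    (haL2 : ∀ i, MemLp (a i) 2 μ) (hgL2 : ∀ t, MemLp (g t) 2 μ)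
    (hwL2 : ∀ i t, MemLp (w i t) 2 μ)
    (havar : ∀ i, Var[a i; μ] = σa ^ 2) (hgvar : ∀ t, Var[g t; μ] = σg ^ 2)
    (hwvar : ∀ i t, Var[w i t; μ] = σw ^ 2)
    (hcov : Pairwise fun k l => cov[twoWayComponent a g w k, twoWayComponent a g w l; μ] = 0) :
    Var[fun ω => ∑ i, ∑ t, W i t * (b + a i ω + g t ω + w i t ω); μ]
      = σa ^ 2 * ∑ i, (∑ t, W i t) ^ 2 + σg ^ 2 * ∑ t, (∑ i, W i t) ^ 2
        + σw ^ 2 * ∑ i, ∑ t, W i t ^ 2 := by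
  have hL2 : ∀ k, MemLp (twoWayComponent a g w k) 2 μ := by
    rintro (i | t | ⟨i, t⟩)
    exacts [haL2 i, hgL2 t, hwL2 i t]
  simp only [sum_mul_twoWay_eq]
  rw [variance_const_add
      (memLp_finsetSum _ fun k _ => (hL2 k).const_mul _).aestronglyMeasurable,
    variance_fun_sum_const_mul_of_uncorrelated hL2 hcov]
  simp only [Fintype.sum_sum_type, Fintype.sum_prod_type, twoWayWeight, twoWayComponent,
    Sum.elim_inl, Sum.elim_inr, havar, hgvar, hwvar, ← Finset.sum_mul]
  ring

end TwoWay

theorem stmt_17_general {Ω : Type*} [MeasurableSpace Ω] (μ : Measure Ω) [IsProbabilityMeasure μ]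
    (N T : ℕ) (b : ℝ)
    (a : Fin N → Ω → ℝ) (g : Fin T → Ω → ℝ) (w : Fin N → Fin T → Ω → ℝ)
    (σa σg σw : ℝ)
    (haL2 : ∀ i, MemLp (a i) 2 μ) (hgL2 : ∀ t, MemLp (g t) 2 μ)
    (hwL2 : ∀ i t, MemLp (w i t) 2 μ)
    (hamean : ∀ i, ∫ ω, a i ω ∂μ = 0) (hgmean : ∀ t, ∫ ω, g t ω ∂μ = 0)
    (hwmean : ∀ i t, ∫ ω, w i t ω ∂μ = 0)
    (havar : ∀ i, variance (a i) μ = σa ^ 2)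
    (hgvar : ∀ t, variance (g t) μ = σg ^ 2)
    (hwvar : ∀ i t, variance (w i t) μ = σw ^ 2)
    (haa : ∀ i j, i ≠ j → ∫ ω, a i ω * a j ω ∂μ = 0)
    (hgg : ∀ s t, s ≠ t → ∫ ω, g s ω * g t ω ∂μ = 0)
    (hww : ∀ i t j s, (i, t) ≠ (j, s) → ∫ ω, w i t ω * w j s ω ∂μ = 0)
    (hag : ∀ i t, ∫ ω, a i ω * g t ω ∂μ = 0)
    (haw : ∀ j i t, ∫ ω, a j ω * w i t ω ∂μ = 0)
    (hgw : ∀ s i t, ∫ ω, g s ω * w i t ω ∂μ = 0)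
    -- the fixed selection matrix and its row/column/grand inclusion frequencies
    (W : Fin N → Fin T → ℝ) (hW01 : ∀ i t, W i t = 0 ∨ W i t = 1)
    (hWpos : 0 < ∑ i, ∑ t, W i t)
    (pRow : Fin N → ℝ) (hpRow : ∀ i, pRow i = (1 / (T : ℝ)) * ∑ t, W i t)
    (pCol : Fin T → ℝ) (hpCol : ∀ t, pCol t = (1 / (N : ℝ)) * ∑ i, W i t)
    (pBar : ℝ) (hpBar : pBar = (1 / (N * T : ℝ)) * ∑ i, ∑ t, W i t) :
    variance (fun ω => (∑ i, ∑ t, W i t)⁻¹ *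
        ∑ i, ∑ t, W i t * (b + a i ω + g t ω + w i t ω)) μ
      = (1 / ((N : ℝ) * T * pBar)) *
          ((T : ℝ) * pBar * σa ^ 2 * ((1 / (N : ℝ)) * ∑ i, (pRow i / pBar) ^ 2) +
           (N : ℝ) * pBar * σg ^ 2 * ((1 / (T : ℝ)) * ∑ t, (pCol t / pBar) ^ 2) +
           σw ^ 2) := by
  have hN : (N : ℝ) ≠ 0 := Nat.cast_ne_zero.mpr (by rintro rfl; simp at hWpos)
  have hT : (T : ℝ) ≠ 0 := Nat.cast_ne_zero.mpr (by rintro rfl; simp at hWpos)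
  set S := ∑ i, ∑ t, W i t with hS
  have hsq : ∀ i t, W i t ^ 2 = W i t := fun i t => by
    rcases hW01 i t with h | h <;> simp [h]
  have hrow : ∀ i, ∑ t, W i t = T * pRow i := fun i => by rw [hpRow]; field_simp
  have hcol : ∀ t, ∑ i, W i t = N * pCol t := fun t => by rw [hpCol]; field_simp
  have hSbar : S = N * T * pBar := by rw [hpBar]; field_simp
  have hpBar0 : pBar ≠ 0 := by rintro h; simp [h] at hSbar; linarith
  rw [variance_const_mul, variance_sum_mul_twoWay W b haL2 hgL2 hwL2 havar hgvar hwvar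
    (pairwise_covariance_twoWayComponent_eq_zero hamean hgmean hwmean haa hgg hww hag haw hgw)]
  simp only [hsq]
  rw [← hS]
  simp only [hrow, hcol, mul_pow, div_pow, ← Finset.sum_div, ← Finset.mul_sum]
  rw [hSbar]
  field_simp

/-- Non-exhaustive sampling variance formula: if `Y_{it} = b + a_i + g_t + w_{it}` with the
standard uncorrelated mean-zero two-way decomposition and `W ∈ {0,1}^{N×T}` is a fixed selection
matrix with at least one `1`, then
`Var(Ȳ_{NT,W}) = (1/(NT p̄))·[T p̄ σ_a²·(1/N)∑_i (p_i/p̄)² + N p̄ σ_g²·(1/T)∑_t (p_t/p̄)² + σ_w²]`. -/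
theorem stmt_17 {Ω : Type*} [MeasurableSpace Ω] (μ : Measure Ω) [IsProbabilityMeasure μ]
    (N T : ℕ) (hN : 0 < N) (hT : 0 < T) (b : ℝ)
    (a : Fin N → Ω → ℝ) (g : Fin T → Ω → ℝ) (w : Fin N → Fin T → Ω → ℝ)
    (σa σg σw : ℝ)
    (haL2 : ∀ i, MemLp (a i) 2 μ) (hgL2 : ∀ t, MemLp (g t) 2 μ)
    (hwL2 : ∀ i t, MemLp (w i t) 2 μ)
    (hamean : ∀ i, ∫ ω, a i ω ∂μ = 0) (hgmean : ∀ t, ∫ ω, g t ω ∂μ = 0)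
    (hwmean : ∀ i t, ∫ ω, w i t ω ∂μ = 0)
    (havar : ∀ i, variance (a i) μ = σa ^ 2)
    (hgvar : ∀ t, variance (g t) μ = σg ^ 2)
    (hwvar : ∀ i t, variance (w i t) μ = σw ^ 2)
    (haa : ∀ i j, i ≠ j → ∫ ω, a i ω * a j ω ∂μ = 0)
    (hgg : ∀ s t, s ≠ t → ∫ ω, g s ω * g t ω ∂μ = 0)
    (hww : ∀ i t j s, (i, t) ≠ (j, s) → ∫ ω, w i t ω * w j s ω ∂μ = 0)
    (hag : ∀ i t, ∫ ω, a i ω * g t ω ∂μ = 0)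
    (haw : ∀ j i t, ∫ ω, a j ω * w i t ω ∂μ = 0)
    (hgw : ∀ s i t, ∫ ω, g s ω * w i t ω ∂μ = 0)
    -- the fixed selection matrix and its row/column/grand inclusion frequencies
    (W : Fin N → Fin T → ℝ) (hW01 : ∀ i t, W i t = 0 ∨ W i t = 1)
    (hWpos : 0 < ∑ i, ∑ t, W i t)
    (pRow : Fin N → ℝ) (hpRow : ∀ i, pRow i = (1 / (T : ℝ)) * ∑ t, W i t)
    (pCol : Fin T → ℝ) (hpCol : ∀ t, pCol t = (1 / (N : ℝ)) * ∑ i, W i t)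
    (pBar : ℝ) (hpBar : pBar = (1 / (N * T : ℝ)) * ∑ i, ∑ t, W i t) :
    variance (fun ω => (∑ i, ∑ t, W i t)⁻¹ *
        ∑ i, ∑ t, W i t * (b + a i ω + g t ω + w i t ω)) μ
      = (1 / ((N : ℝ) * T * pBar)) *
          ((T : ℝ) * pBar * σa ^ 2 * ((1 / (N : ℝ)) * ∑ i, (pRow i / pBar) ^ 2) +
           (N : ℝ) * pBar * σg ^ 2 * ((1 / (T : ℝ)) * ∑ t, (pCol t / pBar) ^ 2) +
           σw ^ 2) :=
  stmt_17_general μ N T b a g w σa σg σw haL2 hgL2 hwL2 hamean hgmean hwmean havar hgvar hwvar haa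
    hgg hww hag haw hgw W hW01 hWpos pRow hpRow pCol hpCol pBar hpBar
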